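/- Let T > 0, let π = (π_n) be a sequence of partitions of [0,T] with mesh tending to 0, let p > 2, and let x : [0,T] → ℝ be continuous with finite p-th variation along π. Write φ(t) = [x]^(p)_π(t) and assume φ is continuously differentiable with 0 < c ≤ φ′ ≤ C < ∞ on [0,T]. For q > 0 set S^{(q)}_n(t) = Σ_{t^n_{i+1} ≤ t} (φ(t^n_{i+1}) − φ(t^n_i))^{(q−2)/q} (x(t^n_{i+1}) − x(t^n_i))². If for some t ∈ (0,T] the limit lim_{n→∞} S^{(p)}_n(t) exists, is finite and strictly positive, then for every q with 0 < q < p one has lim_{n→∞} S^{(q)}_n(t) = +∞ (the sums tend to infinity). -/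

import Mathlib

open Filter Topology Finset

/-!
Write `Δφ` for the increments of `φ` along `π_n`. Since `(q - 2)/q < (p - 2)/p`, each term of
`S^{(q)}_n(t)` is the corresponding term of `S^{(p)}_n(t)` multiplied by
`Δφ ^ -((p - 2)/p - (q - 2)/q)`. As `φ` is uniformly continuous on `[0,T]` and the mesh tends to
zero, `max Δφ → 0`, so this factor eventually exceeds any given `M`. Hence
`S^{(q)}_n(t) ≥ M · S^{(p)}_n(t) → M · L` for every `M`, and `L > 0` gives `S^{(q)}_n(t) → ∞`.
-/

noncomputable def scaledQuadraticVariation (π : ℕ → ℕ → ℝ) (N : ℕ → ℕ) (φ x : ℝ → ℝ)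
    (t q : ℝ) (n : ℕ) : ℝ :=
  ∑ i ∈ range (N n),
    if π n (i + 1) ≤ t then
      (φ (π n (i + 1)) - φ (π n i)) ^ ((q - 2) / q) * (x (π n (i + 1)) - x (π n i)) ^ 2
    else 0

theorem partition_mem_Icc {π : ℕ → ℝ} {N : ℕ} {T : ℝ} (h0 : π 0 = 0) (hT : π N = T)
    (hmono : ∀ i < N, π i < π (i + 1)) {i : ℕ} (hi : i ≤ N) : π i ∈ Set.Icc 0 T := by
  have hπ : MonotoneOn π (Set.Iic N) :=
    (strictMonoOn_Iic_of_lt_succ fun m hm => by simpa using hmono m hm).monotoneOn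
  constructor
  · exact h0 ▸ hπ (Set.mem_Iic.2 (Nat.zero_le N)) hi (Nat.zero_le i)
  · exact hT ▸ hπ hi (Set.mem_Iic.2 le_rfl) hi

theorem eventually_forall_dist_increment_lt {β : Type*} [PseudoMetricSpace β]
    {π : ℕ → ℕ → ℝ} {N : ℕ → ℕ} {s : Set ℝ} {f : ℝ → β} (hf : UniformContinuousOn f s)
    (hmem : ∀ n, ∀ i ≤ N n, π n i ∈ s) (hmono : ∀ n, ∀ i < N n, π n i ≤ π n (i + 1))
    (hmesh : ∀ ε : ℝ, 0 < ε → ∀ᶠ n in atTop, ∀ i < N n, π n (i + 1) - π n i < ε)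
    {ε : ℝ} (hε : 0 < ε) :
    ∀ᶠ n in atTop, ∀ i < N n, dist (f (π n (i + 1))) (f (π n i)) < ε := by
  obtain ⟨δ, hδ, hfδ⟩ := Metric.uniformContinuousOn_iff.1 hf ε hε
  filter_upwards [hmesh δ hδ] with n hn i hi
  refine hfδ _ (hmem n (i + 1) hi) _ (hmem n i hi.le) ?_
  rw [Real.dist_eq, abs_of_nonneg (sub_nonneg.2 (hmono n i hi))]
  exact hn i hi

theorem mul_rpow_le_rpow_of_rpow_sub_le_inv {a b D M : ℝ} (ha : 0 < a) (hM : 0 < M)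
    (hD : 0 ≤ D) (hDM : D ^ (a - b) ≤ M⁻¹) : M * D ^ a ≤ D ^ b := by
  rcases hD.eq_or_lt with rfl | hD
  · rw [Real.zero_rpow ha.ne', mul_zero]
    exact Real.rpow_nonneg le_rfl b
  · calc M * D ^ a = M * D ^ (a - b) * D ^ b := by
          rw [mul_assoc, ← Real.rpow_add hD, sub_add_cancel]
      _ ≤ M * M⁻¹ * D ^ b := by gcongr
      _ = D ^ b := by rw [mul_inv_cancel₀ hM.ne', one_mul]

theorem mul_scaledQuadraticVariation_le {π : ℕ → ℕ → ℝ} {N : ℕ → ℕ} {φ x : ℝ → ℝ}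
    {t p q M : ℝ} {n : ℕ} (hp : 2 < p) (hM : 0 < M)
    (hincr : ∀ i < N n, 0 ≤ φ (π n (i + 1)) - φ (π n i) ∧
      (φ (π n (i + 1)) - φ (π n i)) ^ ((p - 2) / p - (q - 2) / q) ≤ M⁻¹) :
    M * scaledQuadraticVariation π N φ x t p n ≤ scaledQuadraticVariation π N φ x t q n := by
  have hp' : 0 < (p - 2) / p := div_pos (by linarith) (by linarith)
  rw [scaledQuadraticVariation, scaledQuadraticVariation, mul_sum]
  refine sum_le_sum fun i hi => ?_
  obtain ⟨hD, hDM⟩ := hincr i (mem_range.1 hi)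
  split_ifs
  · rw [← mul_assoc]
    exact mul_le_mul_of_nonneg_right
      (mul_rpow_le_rpow_of_rpow_sub_le_inv hp' hM hD hDM) (sq_nonneg _)
  · rw [mul_zero]

theorem tendsto_atTop_of_forall_mul_le {ι : Type*} {l : Filter ι} {u v : ι → ℝ} {L : ℝ}
    (hu : Tendsto u l (𝓝 L)) (hL : 0 < L) (huv : ∀ M > 0, ∀ᶠ i in l, M * u i ≤ v i) :
    Tendsto v l atTop := by
  refine tendsto_atTop.2 fun K => ?_
  set M := 2 * (|K| + 1) / L
  have hM : 0 < M := by positivity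
  filter_upwards [huv M hM, hu.eventually (eventually_gt_nhds (half_lt_self hL))] with i hi hui
  calc K ≤ |K| + 1 := by linarith [le_abs_self K]
    _ = M * (L / 2) := by simp only [M]; field_simp
    _ ≤ M * u i := by gcongr
    _ ≤ v i := hi

theorem scaled_qv_switch_infty_of_lim_pos
    (T : ℝ)
    (π : ℕ → ℕ → ℝ) (N : ℕ → ℕ)
    (hπ0 : ∀ n, π n 0 = 0)
    (hπT : ∀ n, π n (N n) = T)
    (hπmono : ∀ n, ∀ i < N n, π n i < π n (i + 1))
    (hmesh : ∀ ε : ℝ, 0 < ε → ∀ᶠ n in atTop, ∀ i < N n, π n (i + 1) - π n i < ε)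
    (p : ℝ) (hp : 2 < p)
    (x : ℝ → ℝ)
    (φ : ℝ → ℝ)
    (hφcont : ContinuousOn φ (Set.Icc 0 T))
    (hφmono : MonotoneOn φ (Set.Icc 0 T))
    (t : ℝ) (L : ℝ) (hL : 0 < L)
    (hlim : Tendsto (fun n => ∑ i ∈ Finset.range (N n),
        if π n (i + 1) ≤ t then
          (φ (π n (i + 1)) - φ (π n i)) ^ ((p - 2) / p)
            * (x (π n (i + 1)) - x (π n i)) ^ 2
        else 0) atTop (𝓝 L)) :
    ∀ q : ℝ, 0 < q → q < p →
      Tendsto (fun n => ∑ i ∈ Finset.range (N n),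
        if π n (i + 1) ≤ t then
          (φ (π n (i + 1)) - φ (π n i)) ^ ((q - 2) / q)
            * (x (π n (i + 1)) - x (π n i)) ^ 2
        else 0) atTop atTop := by
  intro q hq hqp
  have hmem : ∀ n, ∀ i ≤ N n, π n i ∈ Set.Icc 0 T := fun n _ hi =>
    partition_mem_Icc (hπ0 n) (hπT n) (hπmono n) hi
  set γ := (p - 2) / p - (q - 2) / q
  have hγ : 0 < γ := by
    have : γ = 2 / q - 2 / p := by simp only [γ]; field_simp; ring
    rw [this]
    exact sub_pos.2 (div_lt_div_of_pos_left two_pos hq hqp)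
  refine tendsto_atTop_of_forall_mul_le hlim hL fun M hM => ?_
  obtain ⟨ε, hε, hsmall⟩ := Metric.eventually_nhds_iff.1 <|
    (Real.continuousAt_rpow_const 0 γ (Or.inr hγ.le)).eventually
      (gt_mem_nhds (show (0 : ℝ) ^ γ < M⁻¹ by rwa [Real.zero_rpow hγ.ne', inv_pos]))
  filter_upwards [eventually_forall_dist_increment_lt
    (isCompact_Icc.uniformContinuousOn_of_continuous hφcont) hmem
    (fun n i hi => (hπmono n i hi).le) hmesh hε] with n hn
  refine mul_scaledQuadraticVariation_le hp hM fun i hi => ?_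
  have hD : 0 ≤ φ (π n (i + 1)) - φ (π n i) :=
    sub_nonneg.2 (hφmono (hmem n i hi.le) (hmem n (i + 1) hi) (hπmono n i hi).le)
  refine ⟨hD, (hsmall ?_).le⟩
  rw [Real.dist_eq, sub_zero, ← Real.dist_eq]
  exact hn i hi
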